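/- arXiv:1209.1457 — 5 statements merged into one kernel-verified Lean document; each statement's English description precedes it below -/
import Mathlib

section
/- Let A be an infinite countable set and {a_n}_{n∈A} a family of non-negative real numbers such that there exists c > 0 for which the set {n ∈ A : a_n ≤ c} is infinite, and let {b_n}_{n∈ℤ₊} be a sequence of numbers in [c, ∞) with b_n → ∞ as n → ∞. Then there exists a bijection π : ℤ₊ → A such that a_{π(n)} ≤ b_n for each n ∈ ℤ₊. -/
open Filter Topology

section Aux

variable (f b : ℕ → ℝ)
variable (hex : ∀ (S : Finset ℕ) (n : ℕ), ∃ k, k ∉ S ∧ f k ≤ b n)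

/-- smallest index not in `S` with `f k ≤ b n`. -/
noncomputable def auxPick (S : Finset ℕ) (n : ℕ) : ℕ := Nat.find (hex S n)

/-- indices used after `n` steps. -/
noncomputable def auxU : ℕ → Finset ℕ
  | 0 => ∅
  | n + 1 => insert (auxPick f b hex (auxU n) n) (auxU n)

/-- the greedy sequence. -/
noncomputable def auxG (n : ℕ) : ℕ := auxPick f b hex (auxU f b hex n) n

lemma auxG_spec (n : ℕ) :
    auxG f b hex n ∉ auxU f b hex n ∧ f (auxG f b hex n) ≤ b n :=
  Nat.find_spec (hex (auxU f b hex n) n)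

lemma auxU_succ (n : ℕ) :
    auxU f b hex (n + 1) = insert (auxG f b hex n) (auxU f b hex n) := rfl

lemma auxU_mono {m n : ℕ} (h : m ≤ n) : auxU f b hex m ⊆ auxU f b hex n := by
  induction n with
  | zero => simp [Nat.le_zero.mp h]
  | succ n ih =>
    rcases Nat.lt_or_ge m (n + 1) with h' | h'
    · exact (ih (Nat.lt_succ_iff.mp h')).trans (by rw [auxU_succ]; exact Finset.subset_insert _ _)
    · have : m = n + 1 := le_antisymm h h'
      simp [this]

lemma auxG_mem {m n : ℕ} (h : m < n) : auxG f b hex m ∈ auxU f b hex n := by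
  have : auxG f b hex m ∈ auxU f b hex (m + 1) := by
    rw [auxU_succ]; exact Finset.mem_insert_self _ _
  exact auxU_mono f b hex h this

lemma auxG_inj : Function.Injective (auxG f b hex) := by
  intro m n hmn
  by_contra hne
  wlog h : m < n generalizing m n
  · exact this hmn.symm (Ne.symm hne) (by omega)
  · exact (auxG_spec f b hex n).1 (hmn ▸ auxG_mem f b hex h)

lemma auxG_le {m n : ℕ} (hm : m ∉ auxU f b hex n) (hfm : f m ≤ b n) :
    auxG f b hex n ≤ m :=
  Nat.find_le ⟨hm, hfm⟩

end Aux

/-- Lemma 1: if `A` is an infinite countable set, `a : A → [0,∞)` is such that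
`{n ∈ A : a_n ≤ c}` is infinite for some `c > 0`, and `b : ℤ₊ → [c,∞)` tends to `∞`,
then there is a bijection `π : ℤ₊ → A` with `a_{π(n)} ≤ b_n` for all `n`. -/
theorem exists_bijection_le
    {A : Type*} [Countable A] [Infinite A]
    (a : A → ℝ) (ha : ∀ n, 0 ≤ a n)
    (c : ℝ) (hc : 0 < c) (hinf : {n : A | a n ≤ c}.Infinite)
    (b : ℕ → ℝ) (hbc : ∀ n, c ≤ b n) (hb : Tendsto b atTop atTop) :
    ∃ π : ℕ → A, Function.Bijective π ∧ ∀ n, a (π n) ≤ b n := by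
  obtain ⟨d⟩ := nonempty_denumerable A
  let e : A ≃ ℕ := Denumerable.eqv A
  set f : ℕ → ℝ := fun k => a (e.symm k) with hf
  have hinf' : {k : ℕ | f k ≤ c}.Infinite := by
    have : {k : ℕ | f k ≤ c} = e '' {n : A | a n ≤ c} := by
      ext k
      constructor
      · intro hk; exact ⟨e.symm k, hk, e.apply_symm_apply k⟩
      · rintro ⟨n, hn, rfl⟩; simpa [hf] using hn
    rw [this]
    exact hinf.image (e.injective.injOn)
  have hex : ∀ (S : Finset ℕ) (n : ℕ), ∃ k, k ∉ S ∧ f k ≤ b n := by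
    intro S n
    obtain ⟨k, hk, hkS⟩ := hinf'.exists_notMem_finset S
    exact ⟨k, hkS, le_trans hk (hbc n)⟩
  set g := auxG f b hex with hg
  have hginj : Function.Injective g := auxG_inj f b hex
  have hgsurj : Function.Surjective g := by
    intro m
    by_contra hm
    push_neg at hm
    -- m never appears in any auxU
    have hmU : ∀ n, m ∉ auxU f b hex n := by
      intro n
      induction n with
      | zero => simp [auxU]
      | succ n ih =>
        rw [auxU_succ]
        simp only [Finset.mem_insert]
        rintro (h | h)
        · exact hm n h.symm
        · exact ih h
    obtain ⟨N, hN⟩ := (hb.eventually_ge_atTop (f m)).exists_forall_of_atTop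
    have hlt : ∀ i, g (N + i) < m := by
      intro i
      have hle : g (N + i) ≤ m :=
        auxG_le f b hex (hmU (N + i)) (hN (N + i) (Nat.le_add_right N i))
      exact lt_of_le_of_ne hle (fun h => hm (N + i) h)
    -- pigeonhole: m+1 distinct values all < m
    have := Finset.exists_ne_map_eq_of_card_lt_of_maps_to
      (s := Finset.range (m + 1)) (t := Finset.range m)
      (by simp) (fun i _ => Finset.mem_range.mpr (hlt i))
    obtain ⟨i, _, j, _, hij, heq⟩ := this
    exact hij (Nat.add_left_cancel (hginj heq))
  refine ⟨fun n => e.symm (g n), ⟨e.symm.injective.comp hginj,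
    fun x => ?_⟩, fun n => (auxG_spec f b hex n).2⟩
  obtain ⟨n, hn⟩ := hgsurj (e x)
  exact ⟨n, by simp only []; rw [hn, e.symm_apply_apply]⟩
end

section
/- Let X be an infinite-dimensional Banach space, u ∈ X, and {(x_k, f_k) : 1 ≤ k ≤ n} a finite biorthogonal sequence in X × X*. Then there exist x_{n+1} ∈ X and f_{n+1} ∈ X* such that ‖x_{n+1}‖ = 1, the family {(x_k, f_k) : 1 ≤ k ≤ n+1} is biorthogonal, and u ∈ span{x_1, …, x_{n+1}}. -/
/-!
Let `P w = ∑ j, f j w • x j` be the projection onto `span {x j}` along `⋂ ker f j`. If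
`u - P u ≠ 0`, normalise it to get `x_{n+1}`; otherwise `u` already lies in the span and any
`w` outside the (finite-dimensional, hence proper) span gives `x_{n+1}` from `w - P w`.
In both cases `f_{n+1}` is a Hahn–Banach functional `g` with `g x_{n+1} = 1`, precomposed
with `1 - P` so that it kills every `x i`.
-/

namespace Biorthogonal

open Submodule

variable {𝕜 X ι : Type*} [RCLike 𝕜] [NormedAddCommGroup X] [NormedSpace 𝕜 X] [Fintype ι]

def proj (x : ι → X) (f : ι → X →L[𝕜] 𝕜) : X →L[𝕜] X :=
  ∑ j, (f j).smulRight (x j)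

variable {x : ι → X} {f : ι → X →L[𝕜] 𝕜}

lemma proj_apply (w : X) : proj x f w = ∑ j, f j w • x j := by
  simp [proj]

lemma proj_mem_span (w : X) : proj x f w ∈ span 𝕜 (Set.range x) := by
  rw [proj_apply]
  exact sum_mem fun j _ => smul_mem _ _ (subset_span ⟨j, rfl⟩)

lemma proj_eq_zero_of_forall_apply_eq_zero {y : X} (hy : ∀ i, f i y = 0) : proj x f y = 0 := by
  simp [proj_apply, hy]

variable [DecidableEq ι] (hbi : ∀ i j, f i (x j) = if i = j then 1 else 0)
include hbi

lemma apply_sub_proj (i : ι) (w : X) : f i (w - proj x f w) = 0 := by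
  simp [proj_apply, hbi]

lemma proj_apply_self (i : ι) : proj x f (x i) = x i := by
  simp [proj_apply, hbi]

lemma exists_dual_eq_one_of_apply_eq_zero {y : X} (hy : y ≠ 0) (hfy : ∀ i, f i y = 0) :
    ∃ g : X →L[𝕜] 𝕜, (∀ i, g (x i) = 0) ∧ g y = 1 := by
  obtain ⟨g, hg⟩ := SeparatingDual.exists_eq_one (R := 𝕜) hy
  refine ⟨g.comp (1 - proj x f), fun i => ?_, ?_⟩
  · simp [proj_apply_self hbi]
  · simpa [proj_eq_zero_of_forall_apply_eq_zero hfy] using hg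

lemma exists_ne_zero_sub_proj_mem_span (hX : ¬FiniteDimensional 𝕜 X) (u : X) :
    ∃ y ≠ 0, (∀ i, f i y = 0) ∧ u - proj x f u ∈ 𝕜 ∙ y := by
  by_cases hu : u - proj x f u = 0
  · have hspan : span 𝕜 (Set.range x) ≠ ⊤ := fun h =>
      hX <| Module.finite_def.2 <| h ▸ fg_span (Set.finite_range x)
    obtain ⟨w, hw⟩ := SetLike.exists_not_mem_of_ne_top _ hspan
    refine ⟨w - proj x f w, fun h => hw ?_, (apply_sub_proj hbi · w), hu ▸ zero_mem _⟩
    rw [sub_eq_zero.1 h]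
    exact proj_mem_span w
  · exact ⟨_, hu, (apply_sub_proj hbi · u), mem_span_singleton_self _⟩

end Biorthogonal

open Biorthogonal in
theorem biorthogonal_extend_one_general
    {𝕜 X : Type*} [RCLike 𝕜] [NormedAddCommGroup X] [NormedSpace 𝕜 X]
    (hX : ¬FiniteDimensional 𝕜 X) (u : X) (n : ℕ)
    (x : Fin n → X) (f : Fin n → X →L[𝕜] 𝕜)
    (hbi : ∀ i j, f i (x j) = if i = j then 1 else 0) :
    ∃ (xn : X) (fn : X →L[𝕜] 𝕜),
      ‖xn‖ = 1 ∧
      (∀ i, f i xn = 0) ∧ (∀ i, fn (x i) = 0) ∧ fn xn = 1 ∧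
      u ∈ Submodule.span 𝕜 (Set.range x ∪ {xn}) := by
  obtain ⟨y, hy, hfy, hu⟩ := exists_ne_zero_sub_proj_mem_span hbi hX u
  set xn : X := (‖y‖⁻¹ : 𝕜) • y
  have hxn : xn ≠ 0 := smul_ne_zero (by simpa using hy) hy
  have hfxn : ∀ i, f i xn = 0 := fun i => by simp [xn, hfy]
  obtain ⟨fn, hfn, hfnxn⟩ := exists_dual_eq_one_of_apply_eq_zero hbi hxn hfxn
  refine ⟨xn, fn, norm_smul_inv_norm hy, hfxn, hfn, hfnxn, ?_⟩
  have hspan_xn : 𝕜 ∙ y = 𝕜 ∙ xn :=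
    (Submodule.span_singleton_smul_eq (by simpa using hy) y).symm
  rw [← sub_add_cancel u (proj x f u), Submodule.span_union]
  exact add_mem (Submodule.mem_sup_right (hspan_xn ▸ hu))
    (Submodule.mem_sup_left (proj_mem_span u))

/-- Lemma 2: a finite biorthogonal sequence `{(x_k, f_k) : 1 ≤ k ≤ n}` in an
infinite-dimensional Banach space can be extended by one pair `(x_{n+1}, f_{n+1})` with
`‖x_{n+1}‖ = 1` so that it stays biorthogonal and a prescribed vector `u` belongs to
`span{x_1, …, x_{n+1}}`. -/
theorem biorthogonal_extend_one
    {𝕜 X : Type*} [RCLike 𝕜] [NormedAddCommGroup X] [NormedSpace 𝕜 X] [CompleteSpace X]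
    (hX : ¬FiniteDimensional 𝕜 X) (u : X) (n : ℕ)
    (x : Fin n → X) (f : Fin n → X →L[𝕜] 𝕜)
    (hbi : ∀ i j, f i (x j) = if i = j then 1 else 0) :
    ∃ (xn : X) (fn : X →L[𝕜] 𝕜),
      ‖xn‖ = 1 ∧
      (∀ i, f i xn = 0) ∧ (∀ i, fn (x i) = 0) ∧ fn xn = 1 ∧
      u ∈ Submodule.span 𝕜 (Set.range x ∪ {xn}) :=
  biorthogonal_extend_one_general hX u n x f hbi
end

section
/- Let c > 0, let V be the Volterra operator on L²[0,1], (Vf)(t) = ∫₀ᵗ f(s) ds, and let 𝟏 ∈ L²[0,1] be the constant function 1. Then for every n ∈ ℤ₊, ((I − cV)ⁿ 𝟏)(t) = L_n(ct) for almost every t ∈ [0,1], where L_n is the n-th Laguerre polynomial L_n(t) = Σ_{k=0}^{n} n!(−t)^k / ((n−k)!(k!)²). -/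
open MeasureTheory Filter Topology

local notation "μ01" => (MeasureTheory.volume.restrict (Set.Icc (0:ℝ) 1))

/-- The `n`-th Laguerre polynomial `L_n(t) = ∑_{k=0}^n n! (-t)^k / ((n-k)! (k!)²)`. -/
noncomputable def laguerre (n : ℕ) (t : ℝ) : ℝ :=
  ∑ k ∈ Finset.range (n + 1),
    (n.factorial : ℝ) * (-t) ^ k / (((n - k).factorial : ℝ) * ((k.factorial : ℝ)) ^ 2)

lemma laguerre_eq (n : ℕ) (t : ℝ) : laguerre n t =
    ∑ k ∈ Finset.range (n + 1),
      ((n.factorial : ℝ) * (-1) ^ k / (((n - k).factorial : ℝ) * ((k.factorial : ℝ)) ^ 2)) * t ^ k := by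
  unfold laguerre
  refine Finset.sum_congr rfl fun k _ => ?_
  rw [neg_pow]
  ring

lemma laguerre_int (n : ℕ) (x : ℝ) :
    ∫ u in (0:ℝ)..x, laguerre n u =
      ∑ k ∈ Finset.range (n + 1),
        ((n.factorial : ℝ) * (-1) ^ k / (((n - k).factorial : ℝ) * ((k.factorial : ℝ)) ^ 2))
          * (x ^ (k+1) / (k+1)) := by
  rw [intervalIntegral.integral_congr (fun u _ => laguerre_eq n u)]
  rw [intervalIntegral.integral_finset_sum (fun k _ => by
    apply IntervalIntegrable.const_mul
    exact (intervalIntegral.intervalIntegrable_pow k))]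
  refine Finset.sum_congr rfl fun k _ => ?_
  rw [intervalIntegral.integral_const_mul, integral_pow]
  simp

lemma laguerre_succ_eq (n : ℕ) (x : ℝ) :
    laguerre (n+1) x = laguerre n x - ∫ u in (0:ℝ)..x, laguerre n u := by
  rw [laguerre_int, laguerre_eq, laguerre_eq]
  set A : ℕ → ℝ := fun k => ((n+1).factorial : ℝ) * (-1) ^ k / (((n + 1 - k).factorial : ℝ) * ((k.factorial : ℝ)) ^ 2) with hA
  set C : ℕ → ℝ := fun k => (n.factorial : ℝ) * (-1) ^ k / (((n - k).factorial : ℝ) * ((k.factorial : ℝ)) ^ 2) with hC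
  show ∑ k ∈ Finset.range (n+2), A k * x ^ k
      = ∑ k ∈ Finset.range (n+1), C k * x ^ k - ∑ k ∈ Finset.range (n+1), C k * (x^(k+1)/(k+1))
  rw [Finset.sum_range_succ (fun k => A k * x ^ k),
      Finset.sum_range_succ (fun k => C k * (x^(k+1)/(k+1))),
      Finset.sum_range_succ' (fun k => A k * x ^ k),
      Finset.sum_range_succ' (fun k => C k * x ^ k)]
  have hlast : A (n+1) * x ^ (n+1) + C n * (x^(n+1)/(n+1)) = 0 := by
    have h1 : n + 1 - (n + 1) = 0 := by omega
    have h2 : n - n = 0 := by omega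
    have h3 : (n+1).factorial = (n+1) * n.factorial := rfl
    simp only [hA, hC, h1, h2, h3, Nat.factorial_zero]
    have hnf : (n.factorial : ℝ) ≠ 0 := Nat.cast_ne_zero.mpr n.factorial_ne_zero
    have hn1 : ((n:ℝ)+1) ≠ 0 := by positivity
    push_cast
    field_simp
    ring
  have hmid : ∀ k ∈ Finset.range n,
      A (k+1) * x ^ (k+1) + C k * (x^(k+1)/(k+1)) = C (k+1) * x ^ (k+1) := by
    intro k hk
    rw [Finset.mem_range] at hk
    obtain ⟨m, hm⟩ : ∃ m, n = m + k + 1 := ⟨n - k - 1, by omega⟩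
    subst hm
    have e1 : m + k + 1 + 1 - (k + 1) = m + 1 := by omega
    have e2 : m + k + 1 - (k + 1) = m := by omega
    have e3 : m + k + 1 - k = m + 1 := by omega
    simp only [hA, hC, e1, e2, e3]
    have f1 : ((m+k+1+1).factorial : ℝ) = (m+k+2) * (m+k+1).factorial := by
      push_cast [Nat.factorial_succ]; ring
    have f2 : (((m+1)).factorial : ℝ) = (m+1) * m.factorial := by
      push_cast [Nat.factorial_succ]; ring
    have f3 : (((k+1)).factorial : ℝ) = (k+1) * k.factorial := by
      push_cast [Nat.factorial_succ]; ring
    rw [f1, f2, f3]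
    have h1 : (m.factorial : ℝ) ≠ 0 := Nat.cast_ne_zero.mpr m.factorial_ne_zero
    have h2 : (k.factorial : ℝ) ≠ 0 := Nat.cast_ne_zero.mpr k.factorial_ne_zero
    have h3 : ((m:ℝ)+1) ≠ 0 := by positivity
    have h4 : ((k:ℝ)+1) ≠ 0 := by positivity
    push_cast
    field_simp
    ring
  have h0 : A 0 * x ^ 0 = C 0 * x ^ 0 := by
    have h1 : ((n+1).factorial : ℝ) ≠ 0 := Nat.cast_ne_zero.mpr (n+1).factorial_ne_zero
    have h2 : (n.factorial : ℝ) ≠ 0 := Nat.cast_ne_zero.mpr n.factorial_ne_zero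
    simp only [hA, hC, pow_zero, Nat.sub_zero, Nat.factorial_zero]
    field_simp
  have hsum : ∑ k ∈ Finset.range n, A (k+1) * x^(k+1)
      = ∑ k ∈ Finset.range n, (C (k+1)*x^(k+1) - C k * (x^(k+1)/(k+1))) :=
    Finset.sum_congr rfl fun k hk => by linarith [hmid k hk]
  rw [hsum, Finset.sum_sub_distrib]
  linarith

lemma laguerre_succ_c (n : ℕ) (c t : ℝ) :
    laguerre (n+1) (c*t) = laguerre n (c*t) - c * ∫ s in (0:ℝ)..t, laguerre n (c*s) := by
  rw [laguerre_succ_eq]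
  congr 1
  have := intervalIntegral.smul_integral_comp_mul_left (laguerre n) c (a := 0) (b := t)
  rw [mul_zero] at this
  rw [← this]
  simp

/-- Let `c > 0`, `V` the Volterra operator on `L²[0,1]` and `𝟏` the constant function `1`.
Then `((I - cV)ⁿ 𝟏)(t) = L_n(ct)` for almost every `t ∈ [0,1]`, where `L_n` is the `n`-th
Laguerre polynomial. -/
theorem volterra_pow_one_eq_laguerre
    {𝕜 : Type*} [RCLike 𝕜] (c : ℝ) (hc : 0 < c)
    (V : Lp 𝕜 2 μ01 →L[𝕜] Lp 𝕜 2 μ01)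
    (hV : ∀ f : Lp 𝕜 2 μ01, V f =ᵐ[μ01] fun t => ∫ s in Set.Ioc (0:ℝ) t, f s ∂μ01)
    (one : Lp 𝕜 2 μ01) (hone : one =ᵐ[μ01] fun _ => (1 : 𝕜)) :
    ∀ n : ℕ, (((1 - (c : 𝕜) • V) ^ n) one : Lp 𝕜 2 μ01) =ᵐ[μ01]
      fun t => ((laguerre n (c * t) : ℝ) : 𝕜) := by
  intro n
  induction n with
  | zero =>
    simp only [pow_zero, ContinuousLinearMap.one_apply]
    refine hone.trans (Eventually.of_forall fun t => ?_)
    simp [laguerre]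
  | succ n ih =>
    set g := (((1 - (c : 𝕜) • V) ^ n) one : Lp 𝕜 2 μ01) with hgdef
    have h1 : (((1 - (c : 𝕜) • V) ^ (n+1)) one : Lp 𝕜 2 μ01) = g - (c:𝕜) • V g := by
      rw [pow_succ']
      simp [ContinuousLinearMap.mul_apply, ContinuousLinearMap.sub_apply,
        ContinuousLinearMap.smul_apply, hgdef]
    rw [h1]
    have h2 : ((g - (c:𝕜) • V g : Lp 𝕜 2 μ01) : ℝ → 𝕜) =ᵐ[μ01]
        fun t => (g : ℝ → 𝕜) t - (c:𝕜) * (V g : ℝ → 𝕜) t := by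
      filter_upwards [Lp.coeFn_sub g ((c:𝕜) • V g), Lp.coeFn_smul (c:𝕜) (V g)] with t ht1 ht2
      rw [ht1, Pi.sub_apply, ht2, Pi.smul_apply, smul_eq_mul]
    have hintcong : ∀ t : ℝ, ∫ s in Set.Ioc (0:ℝ) t, (g : ℝ → 𝕜) s ∂μ01
        = ∫ s in Set.Ioc (0:ℝ) t, ((laguerre n (c*s) : ℝ) : 𝕜) ∂μ01 := fun t =>
      integral_congr_ae (ae_restrict_of_ae ih)
    refine h2.trans ?_
    filter_upwards [ih, hV g, ae_restrict_mem measurableSet_Icc] with t htg htv ht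
    rw [htg, htv, hintcong t]
    have hsub : Set.Ioc (0:ℝ) t ⊆ Set.Icc (0:ℝ) 1 := fun s hs =>
      ⟨le_of_lt hs.1, hs.2.trans ht.2⟩
    have hres : (μ01).restrict (Set.Ioc (0:ℝ) t) = volume.restrict (Set.Ioc (0:ℝ) t) := by
      rw [Measure.restrict_restrict measurableSet_Ioc, Set.inter_eq_left.mpr hsub]
    rw [hres, integral_ofReal, ← intervalIntegral.integral_of_le ht.1]
    rw [laguerre_succ_c n c t]
    push_cast
    ring
end

section
/- Let c > 0 and let V be the Volterra operator on L²[0,1], (Vf)(t) = ∫₀ᵗ f(s) ds. Then ‖(I + cV)f‖ ≥ ‖f‖ for every f ∈ L²[0,1]; consequently I + cV is invertible and (I + cV)^{−1} is a contraction (‖(I + cV)^{−1}‖ ≤ 1). -/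
open MeasureTheory Filter Topology

local notation "μ01" => (MeasureTheory.volume.restrict (Set.Icc (0:ℝ) 1))

/-!
`V` is accretive: writing `F = V f`, Fubini over the two triangles `s ≤ t` and `t < s` of
`[0,1]²` (the diagonal is null) gives `⟪F, f⟫ + ⟪f, F⟫ = |∫₀¹ f|²`, so `Re ⟪V f, f⟫ ≥ 0`.
Hence `T = I + cV` satisfies `‖f‖² ≤ Re ⟪T f, f⟫ ≤ ‖T f‖ ‖f‖`, so `T` is bounded below with
constant `1`: it is injective with closed range, and its range has trivial orthogonal
complement since `⟪T f, f⟫ = 0` forces `f = 0`. The inverse then has norm at most `1`.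
-/

open Set ComplexConjugate

section Fubini

variable {α 𝕜 : Type*} [RCLike 𝕜] [LinearOrder α] [TopologicalSpace α] [OrderClosedTopology α]
  [SecondCountableTopology α] [MeasurableSpace α] [OpensMeasurableSpace α]
  {μ : Measure α} [SigmaFinite μ]

theorem integral_mul_integral_eq_integral_Iic_add [NullSingletonClass μ] {f g : α → 𝕜}
    (hf : Integrable f μ) (hg : Integrable g μ) :
    (∫ s, f s ∂μ) * ∫ t, g t ∂μ =
      ∫ t, (∫ s in Iic t, f s ∂μ) * g t ∂μ + ∫ s, f s * ∫ t in Iic s, g t ∂μ ∂μ := by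
  set H : α × α → 𝕜 := fun p => f p.1 * g p.2
  have hH : Integrable H (μ.prod μ) := hf.mul_prod hg
  have hS : MeasurableSet {p : α × α | p.1 ≤ p.2} := measurableSet_le measurable_fst measurable_snd
  have below : ∫ p in {p : α × α | p.1 ≤ p.2}, H p ∂μ.prod μ =
      ∫ t, (∫ s in Iic t, f s ∂μ) * g t ∂μ := by
    rw [← integral_indicator hS, integral_prod_symm _ (hH.indicator hS)]
    refine integral_congr_ae (Eventually.of_forall fun t => ?_)
    dsimp only
    rw [← integral_mul_const, ← integral_indicator measurableSet_Iic]
    rfl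
  have above : ∫ p in {p : α × α | p.1 ≤ p.2}ᶜ, H p ∂μ.prod μ =
      ∫ s, f s * ∫ t in Iic s, g t ∂μ ∂μ := by
    rw [← integral_indicator hS.compl, integral_prod _ (hH.indicator hS.compl)]
    refine integral_congr_ae (Eventually.of_forall fun s => ?_)
    dsimp only
    rw [← setIntegral_congr_set Iio_ae_eq_Iic, ← integral_const_mul,
      ← integral_indicator measurableSet_Iio]
    congr 1 with t
    by_cases hts : t < s <;> simp [H, hts, indicator]
  rw [← integral_prod_mul, ← integral_add_compl hS hH, below, above]

end Fubini

section Volterra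

variable {𝕜 : Type*} [RCLike 𝕜] {μ : Measure ℝ} [IsFiniteMeasure μ] [NullSingletonClass μ]

theorem inner_add_inner_eq_norm_integral_sq {f F : Lp 𝕜 2 μ}
    (hF : F =ᵐ[μ] fun t => ∫ s in Iic t, f s ∂μ) :
    inner 𝕜 F f + inner 𝕜 f F = ((‖∫ t, f t ∂μ‖ ^ 2 : ℝ) : 𝕜) := by
  have hf : Integrable f μ := (Lp.memLp f).integrable one_le_two
  have hfc : Integrable (fun t => conj (f t)) μ :=
    RCLike.conjCLE.toContinuousLinearMap.integrable_comp hf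
  have hFf : inner 𝕜 F f = ∫ t, (∫ s in Iic t, conj (f s) ∂μ) * f t ∂μ := by
    rw [L2.inner_def]
    refine integral_congr_ae ?_
    filter_upwards [hF] with t ht
    rw [RCLike.inner_apply, ht, integral_conj, mul_comm]
  have hfF : inner 𝕜 f F = ∫ t, conj (f t) * ∫ s in Iic t, f s ∂μ ∂μ := by
    rw [L2.inner_def]
    refine integral_congr_ae ?_
    filter_upwards [hF] with t ht
    rw [RCLike.inner_apply, ht, mul_comm]
  rw [hFf, hfF, ← integral_mul_integral_eq_integral_Iic_add hfc hf, integral_conj,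
    RCLike.conj_mul, RCLike.ofReal_pow]

theorem re_inner_nonneg_of_ae_eq_integral_Iic {f F : Lp 𝕜 2 μ}
    (hF : F =ᵐ[μ] fun t => ∫ s in Iic t, f s ∂μ) : 0 ≤ RCLike.re (inner 𝕜 F f) := by
  have h := congrArg RCLike.re (inner_add_inner_eq_norm_integral_sq hF)
  rw [map_add, inner_re_symm f, RCLike.ofReal_re] at h
  linarith [sq_nonneg ‖∫ t, f t ∂μ‖]

end Volterra

section Coercive

variable {𝕜 E : Type*} [RCLike 𝕜] [NormedAddCommGroup E] [InnerProductSpace 𝕜 E]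

theorem norm_sq_le_re_inner_one_add_smul_apply {A : E →L[𝕜] E}
    (hA : ∀ x, 0 ≤ RCLike.re (inner 𝕜 (A x) x)) {c : ℝ} (hc : 0 ≤ c) (x : E) :
    ‖x‖ ^ 2 ≤ RCLike.re (inner 𝕜 ((1 + (c : 𝕜) • A) x) x) := by
  rw [add_apply, inner_add_left, map_add, one_apply_eq_self,
    inner_self_eq_norm_sq, smul_apply, inner_smul_left, RCLike.conj_ofReal,
    RCLike.re_ofReal_mul]
  exact le_add_of_nonneg_right (mul_nonneg hc (hA x))

variable {T : E →L[𝕜] E} (hT : ∀ x, ‖x‖ ^ 2 ≤ RCLike.re (inner 𝕜 (T x) x))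
include hT

theorem norm_le_norm_apply_of_norm_sq_le_re_inner (x : E) : ‖x‖ ≤ ‖T x‖ := by
  rcases (norm_nonneg x).eq_or_lt with hx | hx
  · rw [← hx]; exact norm_nonneg _
  · refine le_of_mul_le_mul_right ?_ hx
    calc ‖x‖ * ‖x‖ = ‖x‖ ^ 2 := sq _ |>.symm
      _ ≤ RCLike.re (inner 𝕜 (T x) x) := hT x
      _ ≤ ‖T x‖ * ‖x‖ := re_inner_le_norm _ _

theorem antilipschitzWith_one_of_norm_sq_le_re_inner : AntilipschitzWith 1 T :=
  T.antilipschitz_of_bound fun x => by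
    simpa using norm_le_norm_apply_of_norm_sq_le_re_inner hT x

theorem range_eq_top_of_norm_sq_le_re_inner [CompleteSpace E] : T.range = ⊤ := by
  have hanti := antilipschitzWith_one_of_norm_sq_le_re_inner hT
  have hclosed : (T.range).topologicalClosure = T.range :=
    (hanti.isClosed_range T.uniformContinuous).submodule_topologicalClosure_eq
  rw [← hclosed, Submodule.topologicalClosure_eq_top_iff, Submodule.eq_bot_iff]
  intro x hx
  have hTx : inner 𝕜 (T x) x = 0 :=
    (Submodule.mem_orthogonal _ _).mp hx (T x) (LinearMap.mem_range_self _ x)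
  have := hT x
  rw [hTx, map_zero] at this
  exact norm_eq_zero.mp (by nlinarith [norm_nonneg x])

theorem exists_inverse_norm_le_one_of_norm_sq_le_re_inner [CompleteSpace E] :
    ∃ W : E →L[𝕜] E, W * T = 1 ∧ T * W = 1 ∧ ‖W‖ ≤ 1 := by
  have hinj : T.ker = ⊥ :=
    LinearMap.ker_eq_bot.mpr (antilipschitzWith_one_of_norm_sq_le_re_inner hT).injective
  let e := ContinuousLinearEquiv.ofBijective T hinj (range_eq_top_of_norm_sq_le_re_inner hT)
  refine ⟨e.symm, ?_, ?_, ?_⟩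
  · ext x; exact e.symm_apply_apply x
  · ext x; exact e.apply_symm_apply x
  · refine ContinuousLinearMap.opNorm_le_bound _ zero_le_one fun x => ?_
    calc ‖e.symm x‖ ≤ ‖T (e.symm x)‖ := norm_le_norm_apply_of_norm_sq_le_re_inner hT _
      _ = 1 * ‖x‖ := by rw [one_mul]; exact congrArg norm (e.apply_symm_apply x)

end Coercive

theorem Ioc_ae_eq_Iic_restrict_Icc {μ : Measure ℝ} [NullSingletonClass μ] {a b : ℝ} (t : ℝ) :
    Ioc a t =ᵐ[μ.restrict (Icc a b)] Iic t := by
  rw [← Measure.restrict_congr_set Ioc_ae_eq_Icc]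
  filter_upwards [ae_restrict_mem measurableSet_Ioc] with x hx
  exact propext (and_iff_right hx.1)

/-- Let `c > 0` and `V` the Volterra operator on `L²[0,1]`. Then `‖(I + cV) f‖ ≥ ‖f‖` for
every `f`; consequently `I + cV` is invertible and `(I + cV)⁻¹` is a contraction. -/
theorem id_add_volterra_expansive_and_inverse_contraction
    {𝕜 : Type*} [RCLike 𝕜] (c : ℝ) (hc : 0 < c)
    (V : Lp 𝕜 2 μ01 →L[𝕜] Lp 𝕜 2 μ01)
    (hV : ∀ f : Lp 𝕜 2 μ01, V f =ᵐ[μ01] fun t => ∫ s in Set.Ioc (0:ℝ) t, f s ∂μ01) :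
    (∀ f : Lp 𝕜 2 μ01, ‖f‖ ≤ ‖(1 + (c : 𝕜) • V) f‖) ∧
    ∃ W : Lp 𝕜 2 μ01 →L[𝕜] Lp 𝕜 2 μ01,
      W * (1 + (c : 𝕜) • V) = 1 ∧ (1 + (c : 𝕜) • V) * W = 1 ∧ ‖W‖ ≤ 1 := by
  have hV_Iic (f : Lp 𝕜 2 μ01) : V f =ᵐ[μ01] fun t => ∫ s in Iic t, f s ∂μ01 :=
    (hV f).trans (.of_forall fun t => setIntegral_congr_set (Ioc_ae_eq_Iic_restrict_Icc t))
  have hcoercive := norm_sq_le_re_inner_one_add_smul_apply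
    (fun f => re_inner_nonneg_of_ae_eq_integral_Iic (hV_Iic f)) hc.le
  exact ⟨norm_le_norm_apply_of_norm_sq_le_re_inner hcoercive,
    exists_inverse_norm_le_one_of_norm_sq_le_re_inner hcoercive⟩
end

section
/- Let J : c₀(ℤ₊) → L²[0,1] be the bounded linear operator defined by (Jx)(t) = Σ_{n=0}^{∞} x_n (1−t)ⁿ / 2ⁿ, let S be the weighted forward shift on c₀(ℤ₊) with S e_n = e_{n+1}/(n+1) for n ∈ ℤ₀₊ (where {e_n} is the canonical basis of c₀), and let V* be the bounded operator on L²[0,1] given by (V*f)(t) = ∫_t^1 f(s) ds (the adjoint of the Volterra operator). Then 2 J S = V* J. -/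
/-!
Integrating termwise, `∫ₜ¹ (1 - s)ⁿ / 2ⁿ ds = 2 · (1 - t)ⁿ⁺¹ / 2ⁿ⁺¹ / (n + 1)`, which is twice
the `(n + 1)`-st term of the series for `J (S x)` at `t`. Termwise integration is justified by
dominated convergence: on `[0, 1]` the `n`-th term is bounded by `‖x‖ / 2ⁿ`.
-/

open MeasureTheory Filter Topology

local notation "μ01" => (MeasureTheory.volume.restrict (Set.Icc (0:ℝ) 1))

open Set

theorem ZeroAtInftyContinuousMap.norm_apply_le {α β : Type*} [TopologicalSpace α]
    [SeminormedAddCommGroup β] (f : ZeroAtInftyContinuousMap α β) (x : α) :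
    ‖f x‖ ≤ ‖f‖ :=
  norm_toBCF_eq_norm (f := f) ▸ f.toBCF.norm_coe_le_norm x

section

variable {𝕜 : Type*} [RCLike 𝕜] {a : ℕ → 𝕜} {C : ℝ}

theorem norm_ofReal_one_sub_pow_div_two_pow_mul_le (ha : ∀ n, ‖a n‖ ≤ C) {t : ℝ}
    (ht : |1 - t| ≤ 1) (n : ℕ) :
    ‖(((1 - t) ^ n / 2 ^ n : ℝ) : 𝕜) * a n‖ ≤ C * (1 / 2) ^ n := by
  have hw : |(1 - t) ^ n / 2 ^ n| ≤ (1 / 2) ^ n := by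
    rw [abs_div, abs_pow, abs_pow, abs_two, div_pow, one_pow]
    gcongr
    exact pow_le_one₀ (abs_nonneg _) ht
  rw [norm_mul, RCLike.norm_ofReal, mul_comm]
  exact mul_le_mul (ha n) hw (abs_nonneg _) ((norm_nonneg _).trans (ha n))

theorem summable_ofReal_one_sub_pow_div_two_pow_mul (ha : ∀ n, ‖a n‖ ≤ C) {t : ℝ}
    (ht : |1 - t| ≤ 1) :
    Summable fun n : ℕ => (((1 - t) ^ n / 2 ^ n : ℝ) : 𝕜) * a n :=
  Summable.of_norm_bounded
    ((summable_geometric_of_lt_one (by norm_num) (by norm_num)).mul_left C)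
    (norm_ofReal_one_sub_pow_div_two_pow_mul_le ha ht)

theorem integral_Ioc_one_sub_pow (n : ℕ) {t : ℝ} (ht : t ≤ 1) :
    ∫ s in Ioc t 1, (1 - s) ^ n = (1 - t) ^ (n + 1) / (n + 1) := by
  rw [← intervalIntegral.integral_of_le ht,
    intervalIntegral.integral_comp_sub_left (fun u => u ^ n), integral_pow]
  ring

theorem integral_Ioc_ofReal_one_sub_pow_div_two_pow_mul (c : 𝕜) (n : ℕ) {t : ℝ}
    (ht : t ≤ 1) :
    ∫ s in Ioc t 1, (((1 - s) ^ n / 2 ^ n : ℝ) : 𝕜) * c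
      = (((1 - t) ^ (n + 1) / (n + 1) / 2 ^ n : ℝ) : 𝕜) * c := by
  rw [integral_mul_const, integral_ofReal, integral_div, integral_Ioc_one_sub_pow n ht]

theorem hasSum_integral_Ioc_tsum_ofReal_one_sub_pow_div_two_pow_mul (ha : ∀ n, ‖a n‖ ≤ C)
    {t : ℝ} (ht0 : 0 ≤ t) (ht1 : t ≤ 1) :
    HasSum (fun n : ℕ => (((1 - t) ^ (n + 1) / (n + 1) / 2 ^ n : ℝ) : 𝕜) * a n)
      (∫ s in Ioc t 1, ∑' n, (((1 - s) ^ n / 2 ^ n : ℝ) : 𝕜) * a n) := by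
  have hs : ∀ᵐ s ∂volume.restrict (Ioc t 1), |1 - s| ≤ 1 := by
    filter_upwards [ae_restrict_mem measurableSet_Ioc] with s hs
    exact abs_le.2 ⟨by linarith [hs.2], by linarith [hs.1]⟩
  simp_rw [← integral_Ioc_ofReal_one_sub_pow_div_two_pow_mul _ _ ht1]
  refine hasSum_integral_of_dominated_convergence (fun n _ => C * (1 / 2) ^ n)
    (fun n => by fun_prop) (fun n => ?_) ?_ (integrable_const _) ?_
  · filter_upwards [hs] with s hs
    exact norm_ofReal_one_sub_pow_div_two_pow_mul_le ha hs n
  · exact ae_of_all _ fun _ =>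
      (summable_geometric_of_lt_one (by norm_num) (by norm_num)).mul_left C
  · filter_upwards [hs] with s hs
    exact (summable_ofReal_one_sub_pow_div_two_pow_mul ha hs).hasSum

end

/-- Let `J : c₀(ℤ₊) → L²[0,1]` be the bounded operator `(Jx)(t) = ∑ₙ xₙ (1-t)ⁿ / 2ⁿ`, let
`S` be the weighted forward shift on `c₀(ℤ₊)` with `S eₙ = eₙ₊₁/(n+1)` (equivalently
`(Sx)₀ = 0` and `(Sx)ₙ₊₁ = xₙ/(n+1)`), and let `V*` be the adjoint of the Volterra
operator, `(V*f)(t) = ∫ₜ¹ f(s) ds`. Then `2 J S = V* J`. -/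
theorem two_J_S_eq_Vstar_J
    {𝕜 : Type*} [RCLike 𝕜]
    (J : ZeroAtInftyContinuousMap ℕ 𝕜 →L[𝕜] Lp 𝕜 2 μ01)
    (hJ : ∀ x : ZeroAtInftyContinuousMap ℕ 𝕜,
      J x =ᵐ[μ01] fun t => ∑' n : ℕ, (((1 - t) ^ n / 2 ^ n : ℝ) : 𝕜) * x n)
    (S : ZeroAtInftyContinuousMap ℕ 𝕜 →L[𝕜] ZeroAtInftyContinuousMap ℕ 𝕜)
    (hS0 : ∀ x : ZeroAtInftyContinuousMap ℕ 𝕜, S x 0 = 0)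
    (hS : ∀ (x : ZeroAtInftyContinuousMap ℕ 𝕜) (n : ℕ),
      S x (n + 1) = x n / ((n : 𝕜) + 1))
    (Vstar : Lp 𝕜 2 μ01 →L[𝕜] Lp 𝕜 2 μ01)
    (hVstar : ∀ f : Lp 𝕜 2 μ01,
      Vstar f =ᵐ[μ01] fun t => ∫ s in Set.Ioc t (1:ℝ), f s ∂μ01) :
    ∀ x : ZeroAtInftyContinuousMap ℕ 𝕜, (2 : 𝕜) • J (S x) = Vstar (J x) := by
  intro x
  apply Lp.ext
  filter_upwards [Lp.coeFn_smul (2 : 𝕜) (J (S x)), hJ (S x), hVstar (J x),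
    ae_restrict_mem measurableSet_Icc] with t hsmul hJSx hVJx ⟨ht0, ht1⟩
  have hVJx_series : ∫ s in Ioc t 1, J x s ∂μ01
      = ∫ s in Ioc t 1, ∑' n : ℕ, (((1 - s) ^ n / 2 ^ n : ℝ) : 𝕜) * x n := by
    rw [integral_congr_ae (ae_restrict_of_ae (hJ x)), Measure.restrict_restrict measurableSet_Ioc,
      inter_eq_left.2 (Ioc_subset_Icc_self.trans (Icc_subset_Icc_left ht0))]
  have hVJx_sum :=
    hasSum_integral_Ioc_tsum_ofReal_one_sub_pow_div_two_pow_mul x.norm_apply_le ht0 ht1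
  have ht : |1 - t| ≤ 1 := abs_le.2 ⟨by linarith, by linarith⟩
  rw [hsmul, Pi.smul_apply, hJSx, hVJx, hVJx_series, ← hVJx_sum.tsum_eq, smul_eq_mul,
    (summable_ofReal_one_sub_pow_div_two_pow_mul (S x).norm_apply_le ht).tsum_eq_zero_add,
    hS0, mul_zero, zero_add, ← tsum_mul_left]
  refine tsum_congr fun n => ?_
  rw [hS]
  push_cast
  field_simp
  ring
end
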